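/- arXiv:1907.03856 — 3 statements merged into one kernel-verified Lean document; each statement's English description precedes it below -/
import Mathlib

section
/- Let n₁,…,n_r be positive integers with n = n₁ + ⋯ + n_r, and let ω₀ ∈ S_n be the permutation sending i to n+1-i. Let W_P = S_{n₁} × ⋯ × S_{n_r} ⊆ S_n be the Young subgroup stabilizing the partition of {1,…,n} into consecutive blocks of sizes n₁,…,n_r. Then the number of cosets ωW_P ∈ S_n/W_P with ω⁻¹ω₀ω ∈ W_P equals ⌊n/2⌋! / ∏ᵢ ⌊nᵢ/2⌋! if at most one nᵢ is odd, and equals 0 otherwise. -/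
/-- The subgroup of permutations of `α` preserving the fibres of `p : α → β`. -/
def fiberwise {α β : Type*} (p : α → β) : Subgroup (Equiv.Perm α) where
  carrier := {w | ∀ v, p (w v) = p v}
  one_mem' := fun _ => rfl
  mul_mem' := fun {a b} ha hb v => by
    simpa [Equiv.Perm.mul_apply] using (ha (b v)).trans (hb v)
  inv_mem' := fun {a} ha v => by
    have h := ha (a⁻¹ v)
    rw [show a (a⁻¹ v) = v by simp] at h
    exact h.symm

/-- The index of the consecutive block (of sizes `nvec 0, nvec 1, …`) containing position `v`. -/
def blkOf {r : ℕ} (nvec : Fin r → ℕ) (v : ℕ) : ℕ :=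
  (Finset.univ.filter fun j : Fin r => ∑ i ∈ Finset.Iic j, nvec i ≤ v).card

/-- The Young subgroup `S_{n₁} × ⋯ × S_{n_r} ⊆ S_n`: permutations preserving the partition
of `{0, …, n-1}` into consecutive blocks of sizes `n₁, …, n_r`. -/
def youngSubgroup (n : ℕ) {r : ℕ} (nvec : Fin r → ℕ) : Subgroup (Equiv.Perm (Fin n)) :=
  fiberwise fun v : Fin n => blkOf nvec (v : ℕ)

/-!
Sending the coset `wW_P` to the labelling `B ∘ w⁻¹`, where `B : Fin n → Fin r` records the block of
each position, identifies `S_n ⧸ W_P` with the labellings having `n_j` positions labelled `j`, and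
`ω⁻¹ω₀ω ∈ W_P` says that `B ∘ ω⁻¹` is invariant under reversal. A reversal-invariant labelling is a
labelling of the first `⌊n/2⌋` positions together with a label of the middle position when `n` is
odd, and label `j` is used twice as often as in the first half, plus once if it labels the middle.
Hence the middle label must be the unique odd block, and the first half is any labelling with block
sizes `⌊n_j/2⌋`; by orbit–stabilizer there are `⌊n/2⌋! / ∏ ⌊n_j/2⌋!` of those.
-/

open Finset Equiv Function

section Fiberwise

variable {α β : Type*}

theorem mem_fiberwise_iff {p : α → β} {w : Perm α} : w ∈ fiberwise p ↔ p ∘ w = p :=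
  funext_iff.symm

theorem fiberwise_comp_of_injective {γ : Type*} {g : β → γ} (hg : Injective g) (p : α → β) :
    fiberwise (g ∘ p) = fiberwise p :=
  Subgroup.ext fun _ => forall_congr' fun _ => hg.eq_iff

def fiberwiseCosetFun (p : α → β) : Perm α ⧸ fiberwise p → α → β :=
  Quotient.lift (fun w => p ∘ ⇑w⁻¹) fun a b hab => by
    have hp : p ∘ ⇑(a⁻¹ * b) = p := mem_fiberwise_iff.mp (QuotientGroup.leftRel_apply.mp hab)
    calc p ∘ ⇑a⁻¹ = (p ∘ ⇑(a⁻¹ * b)) ∘ ⇑b⁻¹ := by ext; simp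
      _ = p ∘ ⇑b⁻¹ := by rw [hp]

theorem fiberwiseCosetFun_mk (p : α → β) (w : Perm α) :
    fiberwiseCosetFun p (QuotientGroup.mk w) = p ∘ ⇑w⁻¹ :=
  rfl

theorem fiberwiseCosetFun_injective (p : α → β) : Injective (fiberwiseCosetFun p) := by
  intro q₁ q₂ h
  induction q₁ using QuotientGroup.induction_on with | H a => ?_
  induction q₂ using QuotientGroup.induction_on with | H b => ?_
  rw [fiberwiseCosetFun_mk, fiberwiseCosetFun_mk] at h
  refine QuotientGroup.eq.mpr (mem_fiberwise_iff.mpr ?_)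
  calc p ∘ ⇑(a⁻¹ * b) = (p ∘ ⇑a⁻¹) ∘ b := rfl
    _ = p := by rw [h]; ext; simp

theorem range_fiberwiseCosetFun (p : α → β) :
    Set.range (fiberwiseCosetFun p) = Set.range fun σ : Perm α => p ∘ σ := by
  ext f
  constructor
  · rintro ⟨q, rfl⟩
    induction q using QuotientGroup.induction_on with | H w => exact ⟨w⁻¹, rfl⟩
  · rintro ⟨σ, rfl⟩
    exact ⟨QuotientGroup.mk σ⁻¹, by rw [fiberwiseCosetFun_mk, inv_inv]⟩

theorem conj_mem_fiberwise_iff (p : α → β) (τ w : Perm α) :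
    w⁻¹ * τ * w ∈ fiberwise p ↔
      fiberwiseCosetFun p (QuotientGroup.mk w) ∘ τ = fiberwiseCosetFun p (QuotientGroup.mk w) := by
  have hw : (p ∘ ⇑w⁻¹) ∘ ⇑w = p := by ext; simp
  have h := w.surjective.injective_comp_right.eq_iff (a := p ∘ ⇑w⁻¹ ∘ τ) (b := p ∘ ⇑w⁻¹)
  rw [hw] at h
  exact mem_fiberwise_iff.trans h

theorem card_cosets_conj_mem_fiberwise (p : α → β) (τ : Perm α) :
    Nat.card {q : Perm α ⧸ fiberwise p |
        ∃ w : Perm α, QuotientGroup.mk w = q ∧ w⁻¹ * τ * w ∈ fiberwise p}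
      = Nat.card {f : α → β // f ∘ τ = f ∧ ∃ σ : Perm α, p ∘ σ = f} := by
  rw [← Nat.card_image_of_injective (fiberwiseCosetFun_injective p)]
  refine Nat.card_congr (Equiv.subtypeEquivRight fun f => ⟨?_, ?_⟩)
  · rintro ⟨_, ⟨w, rfl, hw⟩, rfl⟩
    exact ⟨(conj_mem_fiberwise_iff p τ w).mp hw, w⁻¹, rfl⟩
  · rintro ⟨hf, σ, rfl⟩
    refine ⟨_, ⟨σ⁻¹, rfl, (conj_mem_fiberwise_iff p τ σ⁻¹).mpr ?_⟩, ?_⟩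
    · rwa [fiberwiseCosetFun_mk, inv_inv]
    · rw [fiberwiseCosetFun_mk, inv_inv]

end Fiberwise

section FiberCard

open Nat

variable {α ι : Type*} [Fintype α] [DecidableEq ι]

def fiberCard (f : α → ι) (i : ι) : ℕ := #{a | f a = i}

theorem fiberCard_comp_equiv {α' : Type*} [Fintype α'] (f : α → ι) (e : α' ≃ α) :
    fiberCard (f ∘ e) = fiberCard f := by
  funext i
  simp only [fiberCard, ← Fintype.card_subtype]
  exact Fintype.card_congr (e.subtypeEquiv fun _ => Iff.rfl)

theorem fiberCard_sumElim {β : Type*} [Fintype β] (f : α → ι) (g : β → ι) (i : ι) :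
    fiberCard (Sum.elim f g) i = fiberCard f i + fiberCard g i := by
  simp only [fiberCard, card_filter, Fintype.sum_sum_type, Sum.elim_inl, Sum.elim_inr]
  rfl

theorem fiberCard_le_card (f : α → ι) (i : ι) : fiberCard f i ≤ Fintype.card α :=
  card_filter_le _ _

theorem sum_fiberCard [Fintype ι] (f : α → ι) : ∑ i, fiberCard f i = Fintype.card α :=
  (card_eq_sum_card_fiberwise fun _ _ => mem_univ _).symm

theorem exists_perm_comp_eq_iff {f g : α → ι} :
    (∃ σ : Perm α, f ∘ σ = g) ↔ fiberCard g = fiberCard f := by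
  refine ⟨fun ⟨σ, hσ⟩ => hσ ▸ fiberCard_comp_equiv f σ, fun h => ?_⟩
  have e : ∀ i, {a // g a = i} ≃ {a // f a = i} := fun i =>
    Fintype.equivOfCardEq (by simp only [Fintype.card_subtype]; exact congrFun h i)
  exact ⟨ofFiberEquiv e, funext fun a => ofFiberEquiv_map e a⟩

theorem range_comp_perm (f : α → ι) :
    Set.range (fun σ : Perm α => f ∘ σ) = {g | fiberCard g = fiberCard f} :=
  Set.ext fun _ => exists_perm_comp_eq_iff

theorem exists_fiberCard_eq [Fintype ι] (M : ι → ℕ) (hM : ∑ i, M i = Fintype.card α) :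
    ∃ f : α → ι, fiberCard f = M := by
  let e : α ≃ Σ i, Fin (M i) := Fintype.equivOfCardEq (by simp [hM])
  refine ⟨Sigma.fst ∘ e, ?_⟩
  rw [fiberCard_comp_equiv]
  funext i
  rw [fiberCard, ← Fintype.card_subtype, Fintype.card_congr (Equiv.sigmaSubtype i),
    Fintype.card_fin]

theorem card_fiberwise [DecidableEq α] [Fintype ι] (f : α → ι) :
    Nat.card (fiberwise f) = ∏ i, (fiberCard f i)! := by
  rw [Nat.card_congr (Equiv.subtypeEquivRight fun _ => mem_fiberwise_iff),
    Nat.card_eq_fintype_card, DomMulAct.stabilizer_card]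
  simp only [fiberCard, Fintype.card_subtype]

theorem card_fiberCard_eq [DecidableEq α] [Fintype ι] (M : ι → ℕ) :
    Nat.card {f : α → ι // fiberCard f = M} =
      if ∑ i, M i = Fintype.card α then (Fintype.card α)! / ∏ i, (M i)! else 0 := by
  split_ifs with hM
  · obtain ⟨f, rfl⟩ := exists_fiberCard_eq M hM
    have hindex : Nat.card {g : α → ι // fiberCard g = fiberCard f} = (fiberwise f).index := by
      rw [Subgroup.index, ← Nat.card_range_of_injective (fiberwiseCosetFun_injective f),
        range_fiberwiseCosetFun, range_comp_perm]
      rfl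
    rw [hindex, ← card_fiberwise, ← Fintype.card_perm, ← Nat.card_eq_fintype_card,
      ← Subgroup.card_mul_index, Nat.mul_div_cancel_left _ Nat.card_pos]
  · exact Nat.card_eq_zero.mpr (Or.inl ⟨fun ⟨f, hf⟩ => hM (hf ▸ sum_fiberCard f)⟩)

end FiberCard

section Reversal

variable {ι : Type*} [DecidableEq ι]

/-- `Fin n` as a first half, a middle point when `n` is odd, and a second half in reverse order,
so that `Fin.rev` exchanges the two halves and fixes the middle. -/
def finHalvesEquiv (n : ℕ) : Fin (n / 2) ⊕ (Fin (n % 2) ⊕ Fin (n / 2)) ≃ Fin n :=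
  (Equiv.sumCongr (Equiv.refl _) ((Equiv.sumCongr (Equiv.refl _) Fin.revPerm).trans
    finSumFinEquiv)).trans (finSumFinEquiv.trans (finCongr (by omega)))

theorem rev_finHalvesEquiv_inl {n : ℕ} (u : Fin (n / 2)) :
    Fin.rev (finHalvesEquiv n (.inl u)) = finHalvesEquiv n (.inr (.inr u)) := by
  ext
  simp [finHalvesEquiv]
  omega

theorem rev_finHalvesEquiv_inr_inr {n : ℕ} (u : Fin (n / 2)) :
    Fin.rev (finHalvesEquiv n (.inr (.inr u))) = finHalvesEquiv n (.inl u) := by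
  rw [← rev_finHalvesEquiv_inl, Fin.rev_rev]

theorem rev_finHalvesEquiv_inr_inl {n : ℕ} (t : Fin (n % 2)) :
    Fin.rev (finHalvesEquiv n (.inr (.inl t))) = finHalvesEquiv n (.inr (.inl t)) := by
  ext
  simp [finHalvesEquiv]
  omega

def revInvariantEquiv (n : ℕ) :
    (Fin (n / 2) → ι) × (Fin (n % 2) → ι) ≃ {f : Fin n → ι // f ∘ Fin.rev = f} where
  toFun gh := ⟨Sum.elim gh.1 (Sum.elim gh.2 gh.1) ∘ (finHalvesEquiv n).symm, by
    funext v
    obtain ⟨x, rfl⟩ := (finHalvesEquiv n).surjective v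
    rcases x with u | t | u <;>
      simp [rev_finHalvesEquiv_inl, rev_finHalvesEquiv_inr_inl, rev_finHalvesEquiv_inr_inr]⟩
  invFun f := (f.1 ∘ finHalvesEquiv n ∘ .inl, f.1 ∘ finHalvesEquiv n ∘ .inr ∘ .inl)
  left_inv gh := by ext <;> simp
  right_inv f := by
    ext v
    obtain ⟨x, rfl⟩ := (finHalvesEquiv n).surjective v
    rcases x with u | t | u
    · simp
    · simp
    · simpa [rev_finHalvesEquiv_inl] using (congrFun f.2 (finHalvesEquiv n (.inl u))).symm

theorem fiberCard_revInvariantEquiv {n : ℕ} (gh : (Fin (n / 2) → ι) × (Fin (n % 2) → ι))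
    (i : ι) :
    fiberCard (revInvariantEquiv n gh).1 i = 2 * fiberCard gh.1 i + fiberCard gh.2 i := by
  rw [revInvariantEquiv, Equiv.coe_fn_mk, fiberCard_comp_equiv, fiberCard_sumElim,
    fiberCard_sumElim]
  ring

theorem card_revInvariant_fiberCard_eq {n : ℕ} (M : ι → ℕ) :
    Nat.card {f : Fin n → ι // f ∘ Fin.rev = f ∧ fiberCard f = M} =
      Nat.card {g : Fin (n / 2) → ι // fiberCard g = fun i => M i / 2} *
        Nat.card {h : Fin (n % 2) → ι // fiberCard h = fun i => M i % 2} := by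
  rw [← Nat.card_prod, ← Nat.card_congr Equiv.subtypeProdEquivProd,
    ← Nat.card_congr (Equiv.subtypeSubtypeEquivSubtypeInter _ _)]
  refine Nat.card_congr ((revInvariantEquiv n).subtypeEquiv fun gh => ?_).symm
  have hmiddle : ∀ i, fiberCard gh.2 i < 2 := fun i =>
    (fiberCard_le_card gh.2 i).trans_lt (by simpa using Nat.mod_lt n two_pos)
  simp only [funext_iff, fiberCard_revInvariantEquiv, ← forall_and]
  refine forall_congr' fun i => ?_
  have := hmiddle i
  omega

end Reversal

section Blocks

variable {r : ℕ} (nvec : Fin r → ℕ)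

theorem sum_Iic_eq_sum_Iio_add (j : Fin r) :
    ∑ i ∈ Iic j, nvec i = ∑ i ∈ Iio j, nvec i + nvec j := by
  rw [← Iio_insert, sum_insert (by simp), add_comm]

theorem blkOf_eq {v : ℕ} {j : Fin r} (h₁ : ∑ i ∈ Iio j, nvec i ≤ v)
    (h₂ : v < ∑ i ∈ Iio j, nvec i + nvec j) : blkOf nvec v = j := by
  have hfilter : ({i | ∑ k ∈ Iic i, nvec k ≤ v} : Finset (Fin r)) = Iio j := by
    ext i
    simp only [mem_filter, mem_univ, true_and, mem_Iio]
    constructor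
    · intro hi
      by_contra! hji
      have hmono := sum_le_sum_of_subset (f := nvec) (Iic_subset_Iic.mpr hji)
      rw [sum_Iic_eq_sum_Iio_add] at hmono
      omega
    · intro hij
      have hsub : Iic i ⊆ Iio j := fun k hk => mem_Iio.mpr ((mem_Iic.mp hk).trans_lt hij)
      exact (sum_le_sum_of_subset hsub).trans h₁
  rw [blkOf, hfilter, Fin.card_Iio]

theorem blkOf_lt {v : ℕ} (hv : v < ∑ i, nvec i) : blkOf nvec v < r := by
  have : NeZero r := ⟨by rintro rfl; simp at hv⟩
  calc blkOf nvec v < #(univ : Finset (Fin r)) :=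
        card_lt_card (filter_ssubset.mpr ⟨⊤, mem_univ _, by simpa [Iic_top] using hv⟩)
    _ = r := card_fin r

theorem exists_youngSubgroup_eq_fiberwise {n : ℕ} (hn : n = ∑ i, nvec i) :
    ∃ B : Fin n → Fin r, youngSubgroup n nvec = fiberwise B ∧ fiberCard B = nvec := by
  let B : Fin n → Fin r := fun v => ⟨blkOf nvec v, blkOf_lt nvec (hn ▸ v.2)⟩
  refine ⟨B, fiberwise_comp_of_injective Fin.val_injective B, ?_⟩
  have hle : ∀ j, nvec j ≤ fiberCard B j := fun j => by
    have hj : ∑ i ∈ Iio j, nvec i + nvec j ≤ n := by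
      rw [hn, ← sum_Iic_eq_sum_Iio_add]
      exact sum_le_sum_of_subset (subset_univ _)
    rw [fiberCard, ← Fintype.card_subtype, ← Fintype.card_fin (nvec j)]
    refine Fintype.card_le_of_injective
      (fun t => ⟨⟨∑ i ∈ Iio j, nvec i + t, by omega⟩,
        Fin.ext (blkOf_eq nvec (by simp) (by simp))⟩) ?_
    intro s t hst
    exact Fin.ext (by simpa using hst)
  funext j
  refine (((sum_eq_sum_iff_of_le fun j _ => hle j).mp ?_) j (mem_univ j)).symm
  rw [sum_fiberCard, Fintype.card_fin, hn]

end Blocks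

open Nat in
theorem card_selfdual_cosets_young_general {r n : ℕ} (nvec : Fin r → ℕ)
    (hn : n = ∑ i, nvec i) :
    Nat.card {q : Equiv.Perm (Fin n) ⧸ youngSubgroup n nvec |
        ∃ w : Equiv.Perm (Fin n), QuotientGroup.mk w = q ∧
          w⁻¹ * Fin.revPerm * w ∈ youngSubgroup n nvec}
      = if (Finset.univ.filter fun i => Odd (nvec i)).card ≤ 1
          then (n / 2)! / ∏ i, (nvec i / 2)! else 0 := by
  obtain ⟨B, hyoung, hB⟩ := exists_youngSubgroup_eq_fiberwise nvec hn
  have hodd : ∑ i, nvec i % 2 = #{i | Odd (nvec i)} := by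
    rw [card_filter]
    exact sum_congr rfl fun i _ => by split_ifs with h <;> simp_all [Nat.odd_iff]
  have hsplit : n = 2 * ∑ i, nvec i / 2 + ∑ i, nvec i % 2 := by
    rw [hn, mul_sum, ← sum_add_distrib]
    exact sum_congr rfl fun i _ => (Nat.div_add_mod _ _).symm
  have hmiddle_count : (n % 2)! / ∏ i, (nvec i % 2)! = 1 := by
    rw [factorial_eq_one.mpr (by omega), prod_eq_one fun i _ => factorial_eq_one.mpr (by omega),
      Nat.div_one]
  have hrev : ⇑(Fin.revPerm : Perm (Fin n)) = Fin.rev := funext Fin.revPerm_apply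
  rw [hyoung, card_cosets_conj_mem_fiberwise]
  simp only [exists_perm_comp_eq_iff, hB, hrev]
  rw [card_revInvariant_fiberCard_eq, card_fiberCard_eq, card_fiberCard_eq, Fintype.card_fin,
    Fintype.card_fin, hmiddle_count]
  split_ifs <;> omega

open Nat in
/-- The number of cosets `ωW_P` of the Young subgroup `W_P = S_{n₁} × ⋯ × S_{n_r}` in `S_n`
with `ω⁻¹ω₀ω ∈ W_P`, where `ω₀` is the order-reversing permutation. -/
theorem card_selfdual_cosets_young {r n : ℕ} (nvec : Fin r → ℕ) (hpos : ∀ i, 0 < nvec i)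
    (hn : n = ∑ i, nvec i) :
    Nat.card {q : Equiv.Perm (Fin n) ⧸ youngSubgroup n nvec |
        ∃ w : Equiv.Perm (Fin n), QuotientGroup.mk w = q ∧
          w⁻¹ * Fin.revPerm * w ∈ youngSubgroup n nvec}
      = if (Finset.univ.filter fun i => Odd (nvec i)).card ≤ 1
          then (n / 2)! / ∏ i, (nvec i / 2)! else 0 :=
  card_selfdual_cosets_young_general nvec hn
end

section
/- In the coinvariant algebra ℚ[x₁,…,x_n]/(e₁,…,e_n), the image of the Vandermonde product ∏_{1 ≤ i < j ≤ n}(x_i − x_j) equals n! times the image of the monomial ∏_{i=1}^n x_i^{n−i}. -/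
open MvPolynomial

noncomputable def Ispan (n : ℕ) : Ideal (MvPolynomial (Fin n) ℚ) :=
  Ideal.span (Set.range fun i : Fin n => esymm (Fin n) ℚ ((i : ℕ) + 1))

noncomputable def Qp (n : ℕ) : Polynomial (MvPolynomial (Fin (n+1)) ℚ) :=
  ∏ i : Fin n, (Polynomial.X + Polynomial.C (X i.succ))

noncomputable def Pp (n : ℕ) : Polynomial (MvPolynomial (Fin (n+1)) ℚ) :=
  ∏ i : Fin (n+1), (Polynomial.X + Polynomial.C (X i))

lemma Pp_eq (n : ℕ) : Pp n = (Polynomial.X + Polynomial.C (X 0)) * Qp n := by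
  rw [Pp, Qp, Fin.prod_univ_succ]

lemma Qp_monic (n : ℕ) : (Qp n).Monic := by
  exact Polynomial.monic_prod_of_monic _ _ fun i _ => Polynomial.monic_X_add_C _

lemma Qp_natDegree (n : ℕ) : (Qp n).natDegree = n := by
  rw [Qp, Polynomial.natDegree_prod_of_monic]
  · simp [Polynomial.natDegree_X_add_C]
  · exact fun i _ => Polynomial.monic_X_add_C _

lemma Qp_coeff_top (n : ℕ) : (Qp n).coeff n = 1 := by
  have := (Qp_monic n).coeff_natDegree
  rwa [Qp_natDegree] at this

lemma Pp_coeff_mem (n : ℕ) {k : ℕ} (hk : k ≤ n) : (Pp n).coeff k ∈ Ispan (n+1) := by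
  rw [Pp, MvPolynomial.prod_X_add_C_coeff ℚ (Fin (n+1)) k (by simp; omega)]
  apply Ideal.subset_span
  refine ⟨⟨n - k, by omega⟩, ?_⟩
  simp only [Fintype.card_fin]
  congr 1
  omega

lemma Qp_coeff_cong (n : ℕ) : ∀ j, j ≤ n →
    (Qp n).coeff (n - j) - (-(X 0 : MvPolynomial (Fin (n+1)) ℚ)) ^ j ∈ Ispan (n+1) := by
  intro j
  induction j with
  | zero => intro _; simp [Qp_coeff_top n]
  | succ j ih =>
    intro hj
    have hj' : j ≤ n := by omega
    have hP : (Pp n).coeff (n - j) ∈ Ispan (n+1) := Pp_coeff_mem n (by omega)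
    rw [Pp_eq, add_mul, Polynomial.coeff_add, Polynomial.coeff_C_mul] at hP
    have hXmul : (Polynomial.X * Qp n).coeff (n - j) = (Qp n).coeff (n - (j+1)) := by
      have h1 : n - j = (n - (j+1)) + 1 := by omega
      rw [h1, Polynomial.coeff_X_mul]
    rw [hXmul] at hP
    -- hP : Qp.coeff (n - (j+1)) + X 0 * Qp.coeff (n - j) ∈ I
    have h2 : X 0 * ((Qp n).coeff (n - j) - (-(X 0 : MvPolynomial (Fin (n+1)) ℚ)) ^ j)
        ∈ Ispan (n+1) := Ideal.mul_mem_left _ _ (ih hj')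
    have key : (Qp n).coeff (n - (j+1)) - (-(X 0 : MvPolynomial (Fin (n+1)) ℚ)) ^ (j+1)
        = ((Qp n).coeff (n - (j+1)) + X 0 * (Qp n).coeff (n - j))
          - X 0 * ((Qp n).coeff (n - j) - (-(X 0 : MvPolynomial (Fin (n+1)) ℚ)) ^ j) := by
      ring
    rw [key]
    exact Ideal.sub_mem _ hP h2

lemma X0_pow_mem (n : ℕ) : (X 0 : MvPolynomial (Fin (n+1)) ℚ) ^ (n+1) ∈ Ispan (n+1) := by
  have h0 : (Pp n).coeff 0 ∈ Ispan (n+1) := Pp_coeff_mem n (by omega)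
  rw [Pp_eq, Polynomial.mul_coeff_zero, Polynomial.coeff_add, Polynomial.coeff_X_zero,
    Polynomial.coeff_C_zero, zero_add] at h0
  have hc := Qp_coeff_cong n n le_rfl
  simp only [Nat.sub_self] at hc
  have h2 : X 0 * ((Qp n).coeff 0 - (-(X 0 : MvPolynomial (Fin (n+1)) ℚ)) ^ n)
      ∈ Ispan (n+1) := Ideal.mul_mem_left _ _ hc
  have h3 : X 0 * (-(X 0 : MvPolynomial (Fin (n+1)) ℚ)) ^ n ∈ Ispan (n+1) := by
    have : X 0 * (-(X 0 : MvPolynomial (Fin (n+1)) ℚ)) ^ n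
        = X 0 * (Qp n).coeff 0
          - X 0 * ((Qp n).coeff 0 - (-(X 0 : MvPolynomial (Fin (n+1)) ℚ)) ^ n) := by ring
    rw [this]; exact Ideal.sub_mem _ h0 h2
  have h4 : ((-1 : MvPolynomial (Fin (n+1)) ℚ) ^ n) * (X 0 * (-(X 0 : MvPolynomial (Fin (n+1)) ℚ)) ^ n)
      ∈ Ispan (n+1) := Ideal.mul_mem_left _ _ h3
  have h5 : ((-1 : MvPolynomial (Fin (n+1)) ℚ) ^ n) * (X 0 * (-(X 0 : MvPolynomial (Fin (n+1)) ℚ)) ^ n)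
      = X 0 ^ (n+1) := by
    calc ((-1 : MvPolynomial (Fin (n+1)) ℚ) ^ n) * (X 0 * (-(X 0 : MvPolynomial (Fin (n+1)) ℚ)) ^ n)
        = ((-1 : MvPolynomial (Fin (n+1)) ℚ) ^ (n+n)) * (X 0 * X 0 ^ n) := by
          rw [neg_pow ((X 0 : MvPolynomial (Fin (n+1)) ℚ)) n, pow_add]; ring
      _ = X 0 ^ (n+1) := by
          rw [Even.neg_one_pow ⟨n, rfl⟩]; ring
  rwa [h5] at h4

noncomputable def f0 (n : ℕ) : MvPolynomial (Fin (n+1)) ℚ :=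
  ∏ i : Fin n, (X 0 - X i.succ)

lemma Qp_eval (n : ℕ) :
    (Qp n).eval (-(X 0)) = (-1 : MvPolynomial (Fin (n+1)) ℚ) ^ n * f0 n := by
  rw [Qp, Polynomial.eval_prod, f0]
  rw [show ((-1 : MvPolynomial (Fin (n+1)) ℚ) ^ n) = ∏ _i : Fin n, (-1 : MvPolynomial (Fin (n+1)) ℚ)
    from by rw [Finset.prod_const]; simp, ← Finset.prod_mul_distrib]
  apply Finset.prod_congr rfl
  intro i _
  simp
  ring

lemma neg_one_sq_pow (n : ℕ) : ((-1 : MvPolynomial (Fin (n+1)) ℚ) ^ n) * ((-1) ^ n) = 1 := by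
  rw [← pow_add, Even.neg_one_pow ⟨n, rfl⟩]

lemma f0_cong (n : ℕ) :
    f0 n - ((n : MvPolynomial (Fin (n+1)) ℚ) + 1) * X 0 ^ n ∈ Ispan (n+1) := by
  have hdeg : (Qp n).natDegree < n + 1 := by rw [Qp_natDegree]; omega
  have heval := Polynomial.eval_eq_sum_range' hdeg (-(X 0 : MvPolynomial (Fin (n+1)) ℚ))
  have hsum : (∑ k ∈ Finset.range (n+1),
      ((Qp n).coeff k - (-(X 0 : MvPolynomial (Fin (n+1)) ℚ)) ^ (n - k))
        * (-(X 0 : MvPolynomial (Fin (n+1)) ℚ)) ^ k) ∈ Ispan (n+1) := by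
    apply Ideal.sum_mem
    intro k hk
    apply Ideal.mul_mem_right
    have hk' : k ≤ n := by simp at hk; omega
    have := Qp_coeff_cong n (n - k) (by omega)
    rwa [show n - (n - k) = k from by omega] at this
  have hexp : ∑ k ∈ Finset.range (n+1),
      ((Qp n).coeff k - (-(X 0 : MvPolynomial (Fin (n+1)) ℚ)) ^ (n - k))
        * (-(X 0 : MvPolynomial (Fin (n+1)) ℚ)) ^ k
      = (Qp n).eval (-(X 0)) - ((n : MvPolynomial (Fin (n+1)) ℚ) + 1) * (-(X 0)) ^ n := by
    rw [heval]
    rw [show ((n : MvPolynomial (Fin (n+1)) ℚ) + 1) * (-(X 0)) ^ n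
      = ∑ _k ∈ Finset.range (n+1), (-(X 0 : MvPolynomial (Fin (n+1)) ℚ)) ^ n from by
        rw [Finset.sum_const]; simp [add_mul]]
    rw [← Finset.sum_sub_distrib]
    apply Finset.sum_congr rfl
    intro k hk
    have hk' : k ≤ n := by simp at hk; omega
    rw [sub_mul, ← pow_add, show n - k + k = n from by omega]
  rw [hexp] at hsum
  have hmem := Ideal.mul_mem_left _ ((-1 : MvPolynomial (Fin (n+1)) ℚ) ^ n) hsum
  have : ((-1 : MvPolynomial (Fin (n+1)) ℚ) ^ n)
      * ((Qp n).eval (-(X 0)) - ((n : MvPolynomial (Fin (n+1)) ℚ) + 1) * (-(X 0)) ^ n)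
      = f0 n - ((n : MvPolynomial (Fin (n+1)) ℚ) + 1) * X 0 ^ n := by
    rw [Qp_eval, mul_sub, ← mul_assoc, neg_one_sq_pow, one_mul, neg_pow (X 0 : MvPolynomial (Fin (n+1)) ℚ)]
    rw [show ((-1 : MvPolynomial (Fin (n+1)) ℚ) ^ n) * (((n : MvPolynomial (Fin (n+1)) ℚ) + 1) * ((-1) ^ n * X 0 ^ n))
      = ((-1 : MvPolynomial (Fin (n+1)) ℚ) ^ n * (-1) ^ n) * (((n : MvPolynomial (Fin (n+1)) ℚ) + 1) * X 0 ^ n) from by ring]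
    rw [neg_one_sq_pow, one_mul]
  rwa [this] at hmem

lemma gen_eq_coeff (n : ℕ) {j : ℕ} (hj : j ≤ n) :
    rename Fin.succ (esymm (Fin n) ℚ j) = (Qp n).coeff (n - j) := by
  have hmap : Qp n = Polynomial.map (rename (Fin.succ : Fin n → Fin (n+1))).toRingHom
      (∏ i : Fin n, (Polynomial.X + Polynomial.C (X i))) := by
    rw [Polynomial.map_prod, Qp]
    apply Finset.prod_congr rfl
    intro i _
    rw [Polynomial.map_add, Polynomial.map_X, Polynomial.map_C]
    simp
  rw [hmap, Polynomial.coeff_map]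
  rw [MvPolynomial.prod_X_add_C_coeff ℚ (Fin n) (n - j) (by simp only [Fintype.card_fin]; omega)]
  simp only [Fintype.card_fin]
  rw [show n - (n - j) = j from by omega]
  rfl

lemma f0_mul_gen (n : ℕ) {j : ℕ} (hj : j + 1 ≤ n) :
    f0 n * rename Fin.succ (esymm (Fin n) ℚ (j+1)) ∈ Ispan (n+1) := by
  set g := rename (Fin.succ : Fin n → Fin (n+1)) (esymm (Fin n) ℚ (j+1)) with hg
  have hgc : g - (-(X 0 : MvPolynomial (Fin (n+1)) ℚ)) ^ (j+1) ∈ Ispan (n+1) := by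
    rw [hg, gen_eq_coeff n (by omega)]
    exact Qp_coeff_cong n (j+1) (by omega)
  have h1 : (f0 n - ((n : MvPolynomial (Fin (n+1)) ℚ) + 1) * X 0 ^ n) * g ∈ Ispan (n+1) :=
    Ideal.mul_mem_right _ _ (f0_cong n)
  have h2 : ((n : MvPolynomial (Fin (n+1)) ℚ) + 1) * X 0 ^ n
      * (g - (-(X 0 : MvPolynomial (Fin (n+1)) ℚ)) ^ (j+1)) ∈ Ispan (n+1) :=
    Ideal.mul_mem_left _ _ hgc
  have h3 : ((n : MvPolynomial (Fin (n+1)) ℚ) + 1) * X 0 ^ n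
      * (-(X 0 : MvPolynomial (Fin (n+1)) ℚ)) ^ (j+1) ∈ Ispan (n+1) := by
    have : ((n : MvPolynomial (Fin (n+1)) ℚ) + 1) * X 0 ^ n
        * (-(X 0 : MvPolynomial (Fin (n+1)) ℚ)) ^ (j+1)
        = (((n : MvPolynomial (Fin (n+1)) ℚ) + 1) * (-1)^(j+1) * X 0 ^ j)
          * (X 0 ^ (n+1)) := by
      rw [neg_pow]; ring
    rw [this]
    exact Ideal.mul_mem_left _ _ (X0_pow_mem n)
  have hsplit : f0 n * g
      = (f0 n - ((n : MvPolynomial (Fin (n+1)) ℚ) + 1) * X 0 ^ n) * g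
        + ((n : MvPolynomial (Fin (n+1)) ℚ) + 1) * X 0 ^ n
            * (g - (-(X 0 : MvPolynomial (Fin (n+1)) ℚ)) ^ (j+1))
        + ((n : MvPolynomial (Fin (n+1)) ℚ) + 1) * X 0 ^ n
            * (-(X 0 : MvPolynomial (Fin (n+1)) ℚ)) ^ (j+1) := by ring
  rw [hsplit]
  exact Ideal.add_mem _ (Ideal.add_mem _ h1 h2) h3

lemma vand_succ (n : ℕ) :
    (∏ p ∈ Finset.univ.filter (fun p : Fin (n+1) × Fin (n+1) => p.1 < p.2), (X p.1 - X p.2)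
      : MvPolynomial (Fin (n+1)) ℚ)
    = f0 n * rename Fin.succ
        (∏ p ∈ Finset.univ.filter (fun p : Fin n × Fin n => p.1 < p.2), (X p.1 - X p.2)) := by
  rw [Finset.prod_filter, Finset.prod_filter, ← Finset.univ_product_univ, Finset.prod_product]
  rw [Fin.prod_univ_succ]
  have h1 : (∏ j : Fin (n+1), if (0 : Fin (n+1)) < j then (X 0 - X j : MvPolynomial (Fin (n+1)) ℚ) else 1)
      = f0 n := by
    rw [Fin.prod_univ_succ, if_neg (lt_irrefl _), one_mul, f0]
    apply Finset.prod_congr rfl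
    intro j _
    rw [if_pos (Fin.succ_pos j)]
  have h2 : (∏ i : Fin n, ∏ j : Fin (n+1),
        if (i.succ : Fin (n+1)) < j then (X i.succ - X j : MvPolynomial (Fin (n+1)) ℚ) else 1)
      = rename Fin.succ (∏ p ∈ (Finset.univ : Finset (Fin n × Fin n)), if p.1 < p.2 then (X p.1 - X p.2 : MvPolynomial (Fin n) ℚ) else 1) := by
    rw [← Finset.univ_product_univ, Finset.prod_product, map_prod]
    apply Finset.prod_congr rfl
    intro i _
    rw [map_prod, Fin.prod_univ_succ, if_neg (Fin.not_lt_zero _), one_mul]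
    apply Finset.prod_congr rfl
    intro j _
    rw [apply_ite (rename (Fin.succ : Fin n → Fin (n+1))), map_sub, rename_X, rename_X, map_one]
    simp [Fin.succ_lt_succ_iff]
  rw [h1, h2]

lemma stair_succ (n : ℕ) :
    (∏ i : Fin (n+1), (X i : MvPolynomial (Fin (n+1)) ℚ) ^ (n + 1 - 1 - (i:ℕ)))
    = X 0 ^ n * rename Fin.succ (∏ i : Fin n, (X i : MvPolynomial (Fin n) ℚ) ^ (n - 1 - (i:ℕ))) := by
  rw [Fin.prod_univ_succ, map_prod]
  simp only [map_pow, rename_X, Fin.val_zero, Fin.val_succ, Nat.add_sub_cancel, Nat.sub_zero]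
  congr 1
  apply Finset.prod_congr rfl
  intro i _
  congr 1
  omega

theorem key (n : ℕ) :
    (∏ p ∈ Finset.univ.filter (fun p : Fin n × Fin n => p.1 < p.2), (X p.1 - X p.2))
      - (n.factorial : MvPolynomial (Fin n) ℚ) * ∏ i : Fin n, X i ^ (n - 1 - (i : ℕ))
      ∈ Ispan n := by
  induction n with
  | zero =>
    have : (Finset.univ.filter (fun p : Fin 0 × Fin 0 => p.1 < p.2)) = ∅ := by
      apply Finset.eq_empty_of_forall_notMem; intro p; exact p.1.elim0
    simp [this]
  | succ n ih =>
    set J : Ideal (MvPolynomial (Fin (n+1)) ℚ) :=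
      Ideal.span (Set.range fun i : Fin n => rename Fin.succ (esymm (Fin n) ℚ ((i:ℕ)+1))) with hJ
    have hR : rename (Fin.succ : Fin n → Fin (n+1))
          ((∏ p ∈ Finset.univ.filter (fun p : Fin n × Fin n => p.1 < p.2), (X p.1 - X p.2))
            - (n.factorial : MvPolynomial (Fin n) ℚ) * ∏ i : Fin n, X i ^ (n - 1 - (i : ℕ)))
        ∈ J := by
      have hmem := Ideal.mem_map_of_mem (rename (Fin.succ : Fin n → Fin (n+1))).toRingHom ih
      rw [Ispan, Ideal.map_span, ← Set.range_comp] at hmem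
      exact hmem
    have hf0J : ∀ a ∈ J, f0 n * a ∈ Ispan (n+1) := by
      intro a ha
      induction ha using Submodule.span_induction with
      | mem x hx =>
        obtain ⟨i, rfl⟩ := hx
        exact f0_mul_gen n (by omega)
      | zero => simp
      | add x y hx' hy' hx hy => rw [mul_add]; exact Ideal.add_mem _ hx hy
      | smul r x hx' hx =>
        rw [smul_eq_mul, show f0 n * (r * x) = r * (f0 n * x) from by ring]
        exact Ideal.mul_mem_left _ _ hx
    rw [vand_succ, stair_succ]
    have key_eq : f0 n * rename Fin.succ
          (∏ p ∈ Finset.univ.filter (fun p : Fin n × Fin n => p.1 < p.2), (X p.1 - X p.2))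
        - ((n+1).factorial : MvPolynomial (Fin (n+1)) ℚ)
            * (X 0 ^ n * rename Fin.succ (∏ i : Fin n, (X i : MvPolynomial (Fin n) ℚ) ^ (n - 1 - (i:ℕ))))
        = f0 n * (rename Fin.succ
            ((∏ p ∈ Finset.univ.filter (fun p : Fin n × Fin n => p.1 < p.2), (X p.1 - X p.2))
              - (n.factorial : MvPolynomial (Fin n) ℚ) * ∏ i : Fin n, X i ^ (n - 1 - (i : ℕ))))
          + (n.factorial : MvPolynomial (Fin (n+1)) ℚ)
              * ((f0 n - ((n : MvPolynomial (Fin (n+1)) ℚ) + 1) * X 0 ^ n)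
                * rename Fin.succ (∏ i : Fin n, (X i : MvPolynomial (Fin n) ℚ) ^ (n - 1 - (i:ℕ)))) := by
      rw [map_sub, map_mul, map_natCast, Nat.factorial_succ]
      push_cast
      ring
    rw [key_eq]
    exact Ideal.add_mem _ (hf0J _ hR)
      (Ideal.mul_mem_left _ _ (Ideal.mul_mem_right _ _ (f0_cong n)))


/-- In the coinvariant algebra `ℚ[x₁,…,xₙ]/(e₁,…,eₙ)`, the Vandermonde product
`∏_{i<j}(xᵢ - xⱼ)` equals `n!` times the staircase monomial `∏ᵢ xᵢ^{n-1-i}`. -/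
theorem vandermonde_eq_factorial_smul_staircase (n : ℕ) :
    Ideal.Quotient.mk
        (Ideal.span (Set.range fun i : Fin n => esymm (Fin n) ℚ ((i : ℕ) + 1)))
        (∏ p ∈ Finset.univ.filter (fun p : Fin n × Fin n => p.1 < p.2), (X p.1 - X p.2))
      = n.factorial •
        Ideal.Quotient.mk
          (Ideal.span (Set.range fun i : Fin n => esymm (Fin n) ℚ ((i : ℕ) + 1)))
          (∏ i : Fin n, X i ^ (n - 1 - (i : ℕ))) := by
  have h : n.factorial •
        Ideal.Quotient.mk
          (Ideal.span (Set.range fun i : Fin n => esymm (Fin n) ℚ ((i : ℕ) + 1)))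
          (∏ i : Fin n, X i ^ (n - 1 - (i : ℕ)))
      = Ideal.Quotient.mk
          (Ideal.span (Set.range fun i : Fin n => esymm (Fin n) ℚ ((i : ℕ) + 1)))
          ((n.factorial : MvPolynomial (Fin n) ℚ) * ∏ i : Fin n, X i ^ (n - 1 - (i : ℕ))) := by
    rw [nsmul_eq_mul, map_mul, map_natCast]
  rw [h, Ideal.Quotient.eq]
  exact key n
end

section
/- For polynomial maps fixing the origin, the local algebra of a product map is the tensor product of local algebras: if f: 𝔸ⁿ → 𝔸ⁿ and g: 𝔸ᵐ → 𝔸ᵐ both send 0 to 0 with 0 isolated in its fiber, and F: 𝔸^{n+m} → 𝔸^{n+m} is defined by F(x,y) = (f(x), g(y)), then Q(F) ≅ Q(f) ⊗_K Q(g) as K-algebras, and the EKL-degree satisfies deg₀^{EKL}(F) = deg₀^{EKL}(f) · deg₀^{EKL}(g) in GW(K). -/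
/-- A symmetric nondegenerate bilinear form over `K`, presented by its Gram matrix. -/
structure SymMat (K : Type) [Field K] where
  n : ℕ
  M : Matrix (Fin n) (Fin n) K
  symm : M.IsSymm
  nondeg : IsUnit M.det

variable (K : Type) [Field K]

open Matrix in
/-- The defining relations of the Grothendieck–Witt ring: isomorphic (congruent) forms are
identified, orthogonal direct sum corresponds to addition, tensor product (Kronecker product
of Gram matrices) corresponds to multiplication, the form `⟨1⟩` is the unit and the trivial
form is zero. -/
inductive GWRel : FreeCommRing (SymMat K) → FreeCommRing (SymMat K) → Prop
  | congr (A B : SymMat K) (h : A.n = B.n) (P : Matrix (Fin B.n) (Fin B.n) K)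
      (hP : IsUnit P.det)
      (hc : Matrix.reindex (finCongr h) (finCongr h) A.M = Pᵀ * B.M * P) :
      GWRel (.of A) (.of B)
  | add (A B C : SymMat K) (h : C.n = A.n + B.n)
      (hc : Matrix.reindex (finCongr h) (finCongr h) C.M
        = Matrix.reindex finSumFinEquiv finSumFinEquiv (Matrix.fromBlocks A.M 0 0 B.M)) :
      GWRel (.of C) (.of A + .of B)
  | mul (A B C : SymMat K) (h : C.n = A.n * B.n)
      (hc : Matrix.reindex (finCongr h) (finCongr h) C.M
        = Matrix.reindex finProdFinEquiv finProdFinEquiv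
            (Matrix.kroneckerMap (· * ·) A.M B.M)) :
      GWRel (.of C) (.of A * .of B)
  | one (A : SymMat K) (h : A.n = 1) (hc : ∀ i j, A.M i j = 1) :
      GWRel (.of A) 1
  | zero (A : SymMat K) (h : A.n = 0) :
      GWRel (.of A) 0

/-- The Grothendieck–Witt ring of the field `K`. -/
def GW : Type := RingQuot (GWRel K)

noncomputable instance : CommRing (GW K) := inferInstanceAs (CommRing (RingQuot (GWRel K)))

variable {K}

/-- The class in `GW K` of a symmetric nondegenerate bilinear form. -/
noncomputable def SymMat.cls (A : SymMat K) : GW K :=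
  RingQuot.mkRingHom (GWRel K) (FreeCommRing.of A)

/-- `⟨u⟩ : GW K`, the class of the rank-one form `(x, y) ↦ u * x * y`. -/
noncomputable def GW.diag (u : Kˣ) : GW K :=
  SymMat.cls ⟨1, Matrix.of fun _ _ => (u : K),
    by ext i j; rfl,
    by rw [Matrix.det_fin_one]; exact u.isUnit⟩

open MvPolynomial

section EKL

variable (K : Type) [Field K] (σ : Type) [Fintype σ] [DecidableEq σ]

/-- The maximal ideal of the origin in `𝔸^σ = Spec K[x_v : v ∈ σ]`. -/
noncomputable def originIdeal : Ideal (MvPolynomial σ K) :=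
  RingHom.ker (constantCoeff : MvPolynomial σ K →+* K)

instance : (originIdeal K σ).IsMaximal :=
  RingHom.ker_isMaximal_of_surjective constantCoeff fun r => ⟨C r, constantCoeff_C _ r⟩

/-- The local ring of `𝔸^σ` at the origin. -/
abbrev OriginLoc : Type := Localization.AtPrime (originIdeal K σ)

variable {K σ}

/-- The local algebra `Q(f)` at the origin of the map `𝔸^σ → 𝔸^σ` with components `f`:
the localization of `K[x]` at the maximal ideal of the origin, modulo the components. -/
def LocalAlg (f : σ → MvPolynomial σ K) : Type :=
  OriginLoc K σ ⧸ Ideal.span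
    (Set.range fun i => algebraMap (MvPolynomial σ K) (OriginLoc K σ) (f i))

noncomputable instance (f : σ → MvPolynomial σ K) : CommRing (LocalAlg f) :=
  inferInstanceAs (CommRing (OriginLoc K σ ⧸ Ideal.span
    (Set.range fun i => algebraMap (MvPolynomial σ K) (OriginLoc K σ) (f i))))

/-- The canonical map `K[x] → Q(f)`. -/
noncomputable def toLocalAlg (f : σ → MvPolynomial σ K) :
    MvPolynomial σ K →+* LocalAlg f :=
  (Ideal.Quotient.mk _).comp (algebraMap (MvPolynomial σ K) (OriginLoc K σ))

noncomputable instance (f : σ → MvPolynomial σ K) : Algebra K (LocalAlg f) :=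
  ((toLocalAlg f).comp (algebraMap K (MvPolynomial σ K))).toAlgebra

/-- `d ∈ GW(K)` is the EKL-degree at the origin of the map `𝔸^σ → 𝔸^σ` with components
`f`: for a decomposition `f i = ∑ j a i j * x j`, the distinguished socle element is
`E(f) = det a ∈ Q(f)`, and the degree is the Grothendieck–Witt class of the bilinear form
`(u, v) ↦ φ(u * v)` on `Q(f)`, where `φ` is a linear functional with `φ(E(f)) = 1`. -/
def IsEKLDeg (f : σ → MvPolynomial σ K) (d : GW K) : Prop :=
  ∃ a : Matrix σ σ (MvPolynomial σ K),
    (∀ i, f i = ∑ j, a i j * X j) ∧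
    ∃ (m : ℕ) (bQ : Module.Basis (Fin m) K (LocalAlg f)) (φ : LocalAlg f →ₗ[K] K),
      φ (toLocalAlg f a.det) = 1 ∧
      ∃ (hs : (Matrix.of fun i j : Fin m => φ (bQ i * bQ j)).IsSymm)
        (hnd : IsUnit (Matrix.of fun i j : Fin m => φ (bQ i * bQ j)).det),
        SymMat.cls ⟨m, Matrix.of fun i j : Fin m => φ (bQ i * bQ j), hs, hnd⟩ = d

end EKL

/-! The map `K[x, y] → Q(f) ⊗ Q(g)`, `x ↦ x ⊗ 1`, `y ↦ 1 ⊗ y`, kills the components of `F`.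
Since `Q(f)` and `Q(g)` are finite-dimensional quotients of local rings, their variables are
nilpotent, so every polynomial that does not vanish at the origin becomes a unit in
`Q(f) ⊗ Q(g)`; hence the map descends to `Q(F)`. Its inverse is assembled from the maps
`Q(f) → Q(F)` and `Q(g) → Q(F)` induced by the inclusions of the variables.

For the degree, the block-diagonal matrix with blocks `a_f`, `a_g` decomposes `F`, and its
determinant corresponds to `E(f) ⊗ E(g)`, so `φ_f ⊗ φ_g` is an admissible functional for `F`.
Its Gram matrix on the tensor basis is the Kronecker product of the Gram matrices of `f` and
`g`, whose class in `GW(K)` is the product of their classes. -/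

lemma MvPolynomial.isUnit_aeval_of_isNilpotent {R S σ : Type*} [CommRing R] [CommRing S]
    [Algebra R S] {x : σ → S} (hx : ∀ i, IsNilpotent (x i)) {p : MvPolynomial σ R}
    (hp : IsUnit (constantCoeff p)) : IsUnit (aeval x p) := by
  have hnil (q : MvPolynomial σ R) :
      aeval x q - algebraMap R S (constantCoeff q) ∈ nilradical S := by
    induction q using MvPolynomial.induction_on with
    | C a => simp
    | add q r hq hr => convert add_mem hq hr using 1; simp only [map_add]; ring
    | mul_X q i _ => simpa using Ideal.mul_mem_left _ (aeval x q) (mem_nilradical.2 (hx i))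
  simpa using (mem_nilradical.1 (hnil p)).isUnit_add_right_of_commute
    (hp.map (algebraMap R S)) (Commute.all _ _)

section LocalAlgebra

variable {σ : Type} (f : σ → MvPolynomial σ K)

noncomputable def toLocalAlgₐ : MvPolynomial σ K →ₐ[K] LocalAlg f :=
  { toLocalAlg f with commutes' := fun _ => rfl }

@[simp] lemma toLocalAlgₐ_apply (p : MvPolynomial σ K) : toLocalAlgₐ f p = toLocalAlg f p := rfl

@[simp] lemma toLocalAlg_apply_self (i : σ) : toLocalAlg f (f i) = 0 :=
  Ideal.Quotient.eq_zero_iff_mem.mpr (Ideal.subset_span ⟨i, rfl⟩)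

lemma isUnit_toLocalAlg {p : MvPolynomial σ K} (hp : constantCoeff p ≠ 0) :
    IsUnit (toLocalAlg f p) :=
  (IsLocalization.map_units (OriginLoc K σ) (⟨p, hp⟩ : (originIdeal K σ).primeCompl)).map
    (Ideal.Quotient.mk _)

/-- The maximal ideal of the local ring at the origin maps into the Jacobson radical of its
quotient `Q(f)`, which is nilpotent when `Q(f)` is Artinian. -/
lemma isNilpotent_toLocalAlg [FiniteDimensional K (LocalAlg f)] {p : MvPolynomial σ K}
    (hp : constantCoeff p = 0) : IsNilpotent (toLocalAlg f p) := by
  have : IsArtinianRing (LocalAlg f) := isArtinian_of_tower K inferInstance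
  have hloc : algebraMap _ (OriginLoc K σ) p ∈ (⊥ : Ideal (OriginLoc K σ)).jacobson := by
    rw [IsLocalRing.jacobson_eq_maximalIdeal ⊥ bot_ne_top]
    exact (IsLocalization.AtPrime.to_map_mem_maximal_iff _ (originIdeal K σ) p).mpr hp
  have hjac : toLocalAlg f p ∈ (⊥ : Ideal (LocalAlg f)).jacobson := by
    rw [Ideal.mem_jacobson_bot] at hloc ⊢
    intro y
    obtain ⟨z, rfl⟩ := Ideal.Quotient.mk_surjective y
    have := (hloc z).map (Ideal.Quotient.mk _ : OriginLoc K σ →+* LocalAlg f)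
    rwa [map_add, map_mul, map_one] at this
  rw [IsArtinianRing.jacobson_eq_radical] at hjac
  exact hjac

variable {f} {S : Type*} [CommRing S] [Algebra K S]

noncomputable def LocalAlg.lift (φ : MvPolynomial σ K →ₐ[K] S)
    (hunit : ∀ p, constantCoeff p ≠ 0 → IsUnit (φ p)) (hφ : ∀ i, φ (f i) = 0) :
    LocalAlg f →ₐ[K] S where
  toRingHom := Ideal.Quotient.lift _
    (IsLocalization.lift (M := (originIdeal K σ).primeCompl) (g := φ.toRingHom)
      fun p => hunit p p.2)
    fun a ha => (Ideal.span_le.2 (by rintro _ ⟨i, rfl⟩; simpa using hφ i) : _ ≤ RingHom.ker _) ha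
  commutes' c := (IsLocalization.lift_eq _ _).trans (φ.commutes c)

@[simp] lemma LocalAlg.lift_toLocalAlg (φ : MvPolynomial σ K →ₐ[K] S)
    (hunit : ∀ p, constantCoeff p ≠ 0 → IsUnit (φ p)) (hφ : ∀ i, φ (f i) = 0)
    (p : MvPolynomial σ K) : LocalAlg.lift φ hunit hφ (toLocalAlg f p) = φ p :=
  IsLocalization.lift_eq _ _

lemma LocalAlg.algHom_ext {F G : LocalAlg f →ₐ[K] S}
    (h : ∀ i, F (toLocalAlg f (X i)) = G (toLocalAlg f (X i))) : F = G := by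
  have hpoly : F.comp (toLocalAlgₐ f) = G.comp (toLocalAlgₐ f) := MvPolynomial.algHom_ext h
  have : (F : LocalAlg f →+* S) = G := by
    apply Ideal.Quotient.ringHom_ext
    apply IsLocalization.ringHom_ext (originIdeal K σ).primeCompl
    exact RingHom.ext (AlgHom.congr_fun hpoly)
  exact AlgHom.coe_ringHom_injective this

end LocalAlgebra

open scoped TensorProduct

section Product

variable {σ τ : Type} (f : σ → MvPolynomial σ K) (g : τ → MvPolynomial τ K)

noncomputable abbrev prodMap : σ ⊕ τ → MvPolynomial (σ ⊕ τ) K :=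
  Sum.elim (fun i => rename Sum.inl (f i)) (fun j => rename Sum.inr (g j))

noncomputable def toTensorLocalAlg : MvPolynomial (σ ⊕ τ) K →ₐ[K] LocalAlg f ⊗[K] LocalAlg g :=
  aeval (Sum.elim (fun i => toLocalAlg f (X i) ⊗ₜ 1) (fun j => 1 ⊗ₜ toLocalAlg g (X j)))

@[simp] lemma toTensorLocalAlg_X (v : σ ⊕ τ) : toTensorLocalAlg f g (X v) =
    Sum.elim (fun i => toLocalAlg f (X i) ⊗ₜ 1) (fun j => 1 ⊗ₜ toLocalAlg g (X j)) v :=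
  aeval_X _ v

@[simp] lemma toTensorLocalAlg_rename_inl (p : MvPolynomial σ K) :
    toTensorLocalAlg f g (rename Sum.inl p) = toLocalAlg f p ⊗ₜ 1 := by
  have : (toTensorLocalAlg f g).comp (rename Sum.inl) =
      Algebra.TensorProduct.includeLeft.comp (toLocalAlgₐ f) :=
    algHom_ext fun i => by simp
  simpa using AlgHom.congr_fun this p

@[simp] lemma toTensorLocalAlg_rename_inr (p : MvPolynomial τ K) :
    toTensorLocalAlg f g (rename Sum.inr p) = 1 ⊗ₜ toLocalAlg g p := by
  have : (toTensorLocalAlg f g).comp (rename Sum.inr) =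
      Algebra.TensorProduct.includeRight.comp (toLocalAlgₐ g) :=
    algHom_ext fun j => by simp
  simpa using AlgHom.congr_fun this p

noncomputable def LocalAlg.inl : LocalAlg f →ₐ[K] LocalAlg (prodMap f g) :=
  LocalAlg.lift ((toLocalAlgₐ _).comp (rename Sum.inl))
    (fun p hp => isUnit_toLocalAlg _ (by simpa using hp))
    (fun i => toLocalAlg_apply_self (prodMap f g) (Sum.inl i))

noncomputable def LocalAlg.inr : LocalAlg g →ₐ[K] LocalAlg (prodMap f g) :=
  LocalAlg.lift ((toLocalAlgₐ _).comp (rename Sum.inr))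
    (fun p hp => isUnit_toLocalAlg _ (by simpa using hp))
    (fun j => toLocalAlg_apply_self (prodMap f g) (Sum.inr j))

@[simp] lemma LocalAlg.inl_toLocalAlg (p : MvPolynomial σ K) :
    LocalAlg.inl f g (toLocalAlg f p) = toLocalAlg (prodMap f g) (rename Sum.inl p) :=
  LocalAlg.lift_toLocalAlg _ _ _ p

@[simp] lemma LocalAlg.inr_toLocalAlg (p : MvPolynomial τ K) :
    LocalAlg.inr f g (toLocalAlg g p) = toLocalAlg (prodMap f g) (rename Sum.inr p) :=
  LocalAlg.lift_toLocalAlg _ _ _ p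

variable [FiniteDimensional K (LocalAlg f)] [FiniteDimensional K (LocalAlg g)]

noncomputable def LocalAlg.toTensor : LocalAlg (prodMap f g) →ₐ[K] LocalAlg f ⊗[K] LocalAlg g :=
  LocalAlg.lift (toTensorLocalAlg f g)
    (fun _ hp => isUnit_aeval_of_isNilpotent
      (by
        rintro (i | j)
        · exact (isNilpotent_toLocalAlg f (constantCoeff_X K i)).map
            (Algebra.TensorProduct.includeLeft (S := K))
        · exact (isNilpotent_toLocalAlg g (constantCoeff_X K j)).map
            Algebra.TensorProduct.includeRight)
      hp.isUnit)
    (by rintro (i | j) <;> simp)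

@[simp] lemma LocalAlg.toTensor_toLocalAlg (p : MvPolynomial (σ ⊕ τ) K) :
    LocalAlg.toTensor f g (toLocalAlg (prodMap f g) p) = toTensorLocalAlg f g p :=
  LocalAlg.lift_toLocalAlg _ _ _ p

noncomputable def LocalAlg.prodEquiv :
    LocalAlg (prodMap f g) ≃ₐ[K] LocalAlg f ⊗[K] LocalAlg g :=
  AlgEquiv.ofAlgHom (LocalAlg.toTensor f g)
    (Algebra.TensorProduct.productMap (LocalAlg.inl f g) (LocalAlg.inr f g))
    (Algebra.TensorProduct.ext (LocalAlg.algHom_ext fun i => by simp)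
      (LocalAlg.algHom_ext fun j => by simp))
    (LocalAlg.algHom_ext (by rintro (i | j) <;> simp))

end Product

section Gram

variable {R : Type*} [CommSemiring R] {ι κ : Type*}

noncomputable def gramMatrix {A : Type*} [Semiring A] [Algebra R A] (b : Module.Basis ι R A)
    (φ : A →ₗ[R] R) : Matrix ι ι R :=
  Matrix.of fun i j => φ (b i * b j)

lemma gramMatrix_tensorProduct {A B : Type*} [Semiring A] [Algebra R A] [Semiring B]
    [Algebra R B] (bA : Module.Basis ι R A) (bB : Module.Basis κ R B) (φ : A →ₗ[R] R)
    (ψ : B →ₗ[R] R) :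
    gramMatrix (bA.tensorProduct bB) (TensorProduct.lid R R ∘ₗ TensorProduct.map φ ψ) =
      Matrix.kroneckerMap (· * ·) (gramMatrix bA φ) (gramMatrix bB ψ) := by
  ext ⟨i, k⟩ ⟨j, l⟩
  simp [gramMatrix, Module.Basis.tensorProduct_apply']

lemma gramMatrix_reindex {ι' A : Type*} [Semiring A] [Algebra R A] (b : Module.Basis ι R A)
    (e : ι ≃ ι') (φ : A →ₗ[R] R) :
    gramMatrix (b.reindex e) φ = Matrix.reindex e e (gramMatrix b φ) := by
  ext i j
  simp [gramMatrix]

lemma gramMatrix_map_algEquiv {A B : Type*} [Semiring A] [Algebra R A] [Semiring B]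
    [Algebra R B] (b : Module.Basis ι R B) (e : A ≃ₐ[R] B) (φ : B →ₗ[R] R) :
    gramMatrix (b.map e.symm.toLinearEquiv) (φ ∘ₗ e.toLinearMap) = gramMatrix b φ := by
  ext i j
  simp [gramMatrix]

end Gram

lemma SymMat.cls_kronecker (A B : SymMat K) (M : Matrix (Fin (A.n * B.n)) (Fin (A.n * B.n)) K)
    (hs : M.IsSymm) (hnd : IsUnit M.det) (hM : M = Matrix.reindex finProdFinEquiv
      finProdFinEquiv (Matrix.kroneckerMap (· * ·) A.M B.M)) :
    SymMat.cls ⟨_, M, hs, hnd⟩ = A.cls * B.cls :=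
  (RingQuot.mkRingHom_rel (GWRel.mul A B ⟨_, M, hs, hnd⟩ rfl (by simpa using hM))).trans
    (map_mul _ _ _)

section ProductDegree

variable {σ τ : Type} [Fintype σ] [Fintype τ]
  {f : σ → MvPolynomial σ K} {g : τ → MvPolynomial τ K}
  {af : Matrix σ σ (MvPolynomial σ K)} {ag : Matrix τ τ (MvPolynomial τ K)}

lemma prodMap_eq_sum_fromBlocks (haf : ∀ i, f i = ∑ j, af i j * X j)
    (hag : ∀ i, g i = ∑ j, ag i j * X j) (v : σ ⊕ τ) :
    prodMap f g v = ∑ w,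
      Matrix.fromBlocks (af.map (rename Sum.inl)) 0 0 (ag.map (rename Sum.inr)) v w * X w := by
  rcases v with i | i <;> simp [haf, hag, Fintype.sum_sum_type, map_sum]

lemma LocalAlg.prodEquiv_toLocalAlg_det_fromBlocks [DecidableEq σ] [DecidableEq τ]
    [FiniteDimensional K (LocalAlg f)] [FiniteDimensional K (LocalAlg g)] :
    LocalAlg.prodEquiv f g (toLocalAlg (prodMap f g)
        (Matrix.fromBlocks (af.map (rename Sum.inl)) 0 0 (ag.map (rename Sum.inr))).det) =
      toLocalAlg f af.det ⊗ₜ toLocalAlg g ag.det := by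
  rw [Matrix.det_fromBlocks_zero₂₁, ← AlgHom.mapMatrix_apply, ← AlgHom.map_det,
    ← AlgHom.mapMatrix_apply, ← AlgHom.map_det]
  simp [LocalAlg.prodEquiv]

theorem IsEKLDeg.prod [DecidableEq σ] [DecidableEq τ] [FiniteDimensional K (LocalAlg f)]
    [FiniteDimensional K (LocalAlg g)] {df dg : GW K} (hf : IsEKLDeg f df)
    (hg : IsEKLDeg g dg) :
    IsEKLDeg (prodMap f g) (df * dg) := by
  obtain ⟨af, haf, p, bf, φf, hφf, hsf, hndf, rfl⟩ := hf
  obtain ⟨ag, hag, q, bg, φg, hφg, hsg, hndg, rfl⟩ := hg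
  let e := LocalAlg.prodEquiv f g
  let b := ((bf.tensorProduct bg).reindex finProdFinEquiv).map e.symm.toLinearEquiv
  let φ : LocalAlg (prodMap f g) →ₗ[K] K :=
    (TensorProduct.lid K K ∘ₗ TensorProduct.map φf φg) ∘ₗ e.toLinearMap
  have hgram : gramMatrix b φ = Matrix.reindex finProdFinEquiv finProdFinEquiv
      (Matrix.kroneckerMap (· * ·) (gramMatrix bf φf) (gramMatrix bg φg)) := by
    rw [gramMatrix_map_algEquiv, gramMatrix_reindex, gramMatrix_tensorProduct]
  have hs : (gramMatrix b φ).IsSymm := Matrix.IsSymm.ext fun i j => by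
    simp only [gramMatrix, Matrix.of_apply, mul_comm]
  have hnd : IsUnit (gramMatrix b φ).det := by
    rw [hgram, Matrix.det_reindex_self, Matrix.det_kronecker]
    exact (hndf.pow _).mul (hndg.pow _)
  refine ⟨_, prodMap_eq_sum_fromBlocks haf hag, p * q, b, φ, ?_, hs, hnd, ?_⟩
  · change TensorProduct.lid K K (TensorProduct.map φf φg (e _)) = 1
    rw [LocalAlg.prodEquiv_toLocalAlg_det_fromBlocks]
    simp [hφf, hφg]
  · exact SymMat.cls_kronecker ⟨p, _, hsf, hndf⟩ ⟨q, _, hsg, hndg⟩ _ hs hnd hgram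

end ProductDegree

open MvPolynomial in
theorem localAlg_prod_tensor_and_deg_mul_general (K : Type) [Field K]
    (n m : ℕ) (f : Fin n → MvPolynomial (Fin n) K) (g : Fin m → MvPolynomial (Fin m) K)
    (hfin : FiniteDimensional K (LocalAlg f)) (hgin : FiniteDimensional K (LocalAlg g)) :
    Nonempty
        (LocalAlg (Sum.elim (fun i => rename Sum.inl (f i))
            (fun j => rename Sum.inr (g j)) : Fin n ⊕ Fin m →
              MvPolynomial (Fin n ⊕ Fin m) K)
          ≃ₐ[K] TensorProduct K (LocalAlg f) (LocalAlg g)) ∧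
      ∀ df dg : GW K, IsEKLDeg f df → IsEKLDeg g dg →
        IsEKLDeg (Sum.elim (fun i => rename Sum.inl (f i))
          (fun j => rename Sum.inr (g j))) (df * dg) :=
  ⟨⟨LocalAlg.prodEquiv f g⟩, fun _ _ hf hg => hf.prod hg⟩

open MvPolynomial in
/-- For a product map `F(x, y) = (f(x), g(y))`, the local algebra at the origin is the
tensor product of local algebras, `Q(F) ≅ Q(f) ⊗[K] Q(g)` as `K`-algebras, and the
EKL-degree satisfies `deg₀ᴱᴷᴸ(F) = deg₀ᴱᴷᴸ(f) · deg₀ᴱᴷᴸ(g)` in `GW(K)`. -/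
theorem localAlg_prod_tensor_and_deg_mul (K : Type) [Field K] (hK : ringChar K ≠ 2)
    (n m : ℕ) (f : Fin n → MvPolynomial (Fin n) K) (g : Fin m → MvPolynomial (Fin m) K)
    (hf0 : ∀ i, constantCoeff (f i) = 0) (hg0 : ∀ j, constantCoeff (g j) = 0)
    (hfin : FiniteDimensional K (LocalAlg f)) (hgin : FiniteDimensional K (LocalAlg g)) :
    Nonempty
        (LocalAlg (Sum.elim (fun i => rename Sum.inl (f i))
            (fun j => rename Sum.inr (g j)) : Fin n ⊕ Fin m →
              MvPolynomial (Fin n ⊕ Fin m) K)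
          ≃ₐ[K] TensorProduct K (LocalAlg f) (LocalAlg g)) ∧
      ∀ df dg : GW K, IsEKLDeg f df → IsEKLDeg g dg →
        IsEKLDeg (Sum.elim (fun i => rename Sum.inl (f i))
          (fun j => rename Sum.inr (g j))) (df * dg) :=
  localAlg_prod_tensor_and_deg_mul_general K n m f g hfin hgin
end
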